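/- arXiv:math/9201237 — 5 statements merged into one kernel-verified Lean document; each statement's English description precedes it below -/
import Mathlib

section
/- Let E and F be Banach spaces, each isomorphic to its own square (i.e., there exist continuous linear bijections with continuous inverses E → E × E and F → F × F). Suppose each is isomorphic to a complemented subspace of the other, i.e., there exist bounded linear maps S₁ : E → F, P₁ : F → E with P₁ ∘ S₁ = id_E, and bounded linear maps S₂ : F → E, P₂ : E → F with P₂ ∘ S₂ = id_F. Then E and F are isomorphic: there exists a continuous linear bijection from E onto F with continuous inverse. -/
/-! Pełczyński's decomposition method. If `P ∘ S = id` for `S : E → F`, then `F ≅ E ⊕ X` with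
`X = ker P`. If moreover `E ≅ E ⊕ E`, then `E ⊕ F ≅ E ⊕ (E ⊕ X) ≅ (E ⊕ E) ⊕ X ≅ E ⊕ X ≅ F`:
a complemented copy of a space isomorphic to its square is absorbed. Applied in both directions
this gives `F ≅ E ⊕ F` and `E ≅ F ⊕ E`, hence `E ≅ F`. -/

namespace ContinuousLinearEquiv

variable {R E F : Type*} [Ring R]
  [TopologicalSpace E] [AddCommGroup E] [Module R E]
  [TopologicalSpace F] [AddCommGroup F] [Module R F] [IsTopologicalAddGroup F]

theorem nonempty_prod_equiv_of_leftInverse_of_equiv_prod_self (S : E →L[R] F) (P : F →L[R] E)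
    (h : Function.LeftInverse P S) (sE : E ≃L[R] E × E) : Nonempty ((E × F) ≃L[R] F) :=
  let eF := equivOfRightInverse P S h
  ⟨((ContinuousLinearEquiv.refl R E).prodCongr eF).trans <| (prodAssoc R E E _).symm.trans <|
    (sE.symm.prodCongr (ContinuousLinearEquiv.refl R _)).trans eF.symm⟩

end ContinuousLinearEquiv

theorem pelczynski_decomposition_general
    (E F : Type*) [NormedAddCommGroup E] [NormedSpace ℝ E]
    [NormedAddCommGroup F] [NormedSpace ℝ F]
    (hE : Nonempty (E ≃L[ℝ] E × E)) (hF : Nonempty (F ≃L[ℝ] F × F))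
    (h₁ : ∃ (S₁ : E →L[ℝ] F) (P₁ : F →L[ℝ] E), ∀ x : E, P₁ (S₁ x) = x)
    (h₂ : ∃ (S₂ : F →L[ℝ] E) (P₂ : E →L[ℝ] F), ∀ y : F, P₂ (S₂ y) = y) :
    Nonempty (E ≃L[ℝ] F) := by
  obtain ⟨sE⟩ := hE
  obtain ⟨sF⟩ := hF
  obtain ⟨S₁, P₁, hP₁⟩ := h₁
  obtain ⟨S₂, P₂, hP₂⟩ := h₂
  obtain ⟨eEF⟩ := ContinuousLinearEquiv.nonempty_prod_equiv_of_leftInverse_of_equiv_prod_self S₁ P₁ hP₁ sE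
  obtain ⟨eFE⟩ := ContinuousLinearEquiv.nonempty_prod_equiv_of_leftInverse_of_equiv_prod_self S₂ P₂ hP₂ sF
  exact ⟨eFE.symm.trans <| (ContinuousLinearEquiv.prodComm ℝ F E).trans eEF⟩

/-- Pełczyński's decomposition method: if `E` and `F` are Banach spaces, each isomorphic
to its own square, and each isomorphic to a complemented subspace of the other (witnessed
by bounded linear maps `S₁ : E → F`, `P₁ : F → E` with `P₁ ∘ S₁ = id`, and `S₂ : F → E`,
`P₂ : E → F` with `P₂ ∘ S₂ = id`), then `E` and `F` are isomorphic. -/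
theorem pelczynski_decomposition
    (E F : Type*) [NormedAddCommGroup E] [NormedSpace ℝ E] [CompleteSpace E]
    [NormedAddCommGroup F] [NormedSpace ℝ F] [CompleteSpace F]
    (hE : Nonempty (E ≃L[ℝ] E × E)) (hF : Nonempty (F ≃L[ℝ] F × F))
    (h₁ : ∃ (S₁ : E →L[ℝ] F) (P₁ : F →L[ℝ] E), ∀ x : E, P₁ (S₁ x) = x)
    (h₂ : ∃ (S₂ : F →L[ℝ] E) (P₂ : E →L[ℝ] F), ∀ y : F, P₂ (S₂ y) = y) :
    Nonempty (E ≃L[ℝ] F) :=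
  pelczynski_decomposition_general E F hE hF h₁ h₂
end

section
/- Let k ≥ 1 be an integer and let f ∈ L^{p,∞}[0,∞). Then sup_{n≥0} 2^{n/q} · ||| ( ∫_{(j-1)/2^n}^{j/2^n} f )_{j=1}^{k·2^n} ||| ≤ ‖f‖, where for the finite sequence a = (a_j)_{j=1}^{k·2^n} one sets |||a||| = max_{1≤j≤k·2^n} j^{1/p} a*_j with (a*_j) the decreasing rearrangement of (|a_j|). -/
/-! Let `B` be the union of the `j` dyadic intervals of length `2^{-n}` on which `|∫ f|` is
largest. Then `∫_B |f| ≥ j a*_j` and `|B| = j 2^{-n}`, so testing the weak norm on `B` gives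
`‖f‖ ≥ j a*_j (j 2^{-n})^{-1/q} = 2^{n/q} j^{1/p} a*_j`, since `1 - 1/q = 1/p`. -/

open MeasureTheory Set ENNReal

noncomputable def wnorm {α : Type*} [MeasurableSpace α] (q : ℝ) (μ : Measure α)
    (f : α → ℝ) : ℝ≥0∞ :=
  ⨆ (B : Set α) (_ : MeasurableSet B ∧ 0 < μ B ∧ μ B < ⊤),
    (∫⁻ x in B, ENNReal.ofReal |f x| ∂μ) / μ B ^ (1 / q)

def SigmaFinSupp {α : Type*} [MeasurableSpace α] (μ : Measure α) (f : α → ℝ) : Prop :=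
  ∃ s : ℕ → Set α, {x | f x ≠ 0} ⊆ (⋃ n, s n) ∧ ∀ n, μ (s n) < ⊤

def MemW {α : Type*} [MeasurableSpace α] (q : ℝ) (μ : Measure α) (f : α → ℝ) : Prop :=
  Measurable f ∧ SigmaFinSupp μ f ∧ wnorm q μ f < ⊤

/-- The integral of `f` over the dyadic interval `[j/2^n, (j+1)/2^n]`
(0-indexed; this is the paper's `∫_{(j-1)/2^n}^{j/2^n} f` for the 1-indexed `j`). -/
noncomputable def dyadicInt (f : ℝ → ℝ) (n j : ℕ) : ℝ :=
  ∫ t in ((j : ℝ) / 2 ^ n)..(((j : ℝ) + 1) / 2 ^ n), f t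

open Finset Function

section WeakNorm

variable {α : Type*} [MeasurableSpace α] {μ : Measure α} {q : ℝ}

theorem setLIntegral_div_rpow_le_wnorm (f : α → ℝ) {B : Set α} (hB : MeasurableSet B)
    (hB₀ : 0 < μ B) (hB_top : μ B < ⊤) :
    (∫⁻ x in B, ENNReal.ofReal |f x| ∂μ) / μ B ^ (1 / q) ≤ wnorm q μ f :=
  le_iSup₂_of_le (f := fun B (_ : MeasurableSet B ∧ 0 < μ B ∧ μ B < ⊤) =>
    (∫⁻ x in B, ENNReal.ofReal |f x| ∂μ) / μ B ^ (1 / q)) B ⟨hB, hB₀, hB_top⟩ le_rfl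

theorem Real.mul_div_mul_rpow_eq {p m c : ℝ} (hpq : p.HolderConjugate q) (hm : 0 < m)
    (hc : 0 < c) (a : ℝ) :
    m * a / (m * c) ^ (1 / q) = c⁻¹ ^ (1 / q) * m ^ (1 / p) * a := by
  have hm_split : m = m ^ (1 / p) * m ^ (1 / q) := by
    rw [← Real.rpow_add hm, one_div, one_div, hpq.inv_add_inv_eq_one, Real.rpow_one]
  rw [Real.mul_rpow hm.le hc.le, Real.inv_rpow hc.le]
  nth_rewrite 1 [hm_split]
  have : 0 < m ^ (1 / q) := by positivity
  have : 0 < c ^ (1 / q) := by positivity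
  field_simp

theorem le_wnorm_of_pairwiseDisjoint {ι : Type*} {p : ℝ} (hpq : p.HolderConjugate q)
    (f : α → ℝ) {I : ι → Set α} (hI : ∀ i, MeasurableSet (I i))
    (hI_disj : Pairwise (Disjoint on I)) {c : ℝ} (hc : 0 < c)
    (hμI : ∀ i, μ (I i) = ENNReal.ofReal c) {S : Finset ι} (hS : S.Nonempty) {a : ℝ}
    (ha : ∀ i ∈ S, ENNReal.ofReal a ≤ ∫⁻ x in I i, ENNReal.ofReal |f x| ∂μ) :
    ENNReal.ofReal (c⁻¹ ^ (1 / q) * (#S : ℝ) ^ (1 / p) * a) ≤ wnorm q μ f := by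
  have hS_pos : (0 : ℝ) < #S := by exact_mod_cast hS.card_pos
  have hS_disj : (S : Set ι).PairwiseDisjoint I := hI_disj.set_pairwise _
  set B := ⋃ i ∈ S, I i
  have hμB : μ B = ENNReal.ofReal (#S * c) := by
    rw [measure_biUnion_finset hS_disj fun i _ => hI i]
    simp only [hμI, sum_const, nsmul_eq_mul]
    rw [ENNReal.ofReal_mul (Nat.cast_nonneg _), ENNReal.ofReal_natCast]
  have hmass : ENNReal.ofReal (#S * a) ≤ ∫⁻ x in B, ENNReal.ofReal |f x| ∂μ := by
    rw [lintegral_biUnion_finset hS_disj (fun i _ => hI i), ENNReal.ofReal_mul (Nat.cast_nonneg _),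
      ENNReal.ofReal_natCast, ← nsmul_eq_mul]
    exact card_nsmul_le_sum _ _ _ ha
  have hB_pos : 0 < μ B := by rw [hμB]; exact ENNReal.ofReal_pos.mpr (by positivity)
  calc ENNReal.ofReal (c⁻¹ ^ (1 / q) * (#S : ℝ) ^ (1 / p) * a)
      = ENNReal.ofReal (#S * a) / μ B ^ (1 / q) := by
        rw [hμB, ENNReal.ofReal_rpow_of_pos (by positivity),
          ← ENNReal.ofReal_div_of_pos (by positivity), Real.mul_div_mul_rpow_eq hpq hS_pos hc]
    _ ≤ (∫⁻ x in B, ENNReal.ofReal |f x| ∂μ) / μ B ^ (1 / q) := by gcongr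
    _ ≤ wnorm q μ f :=
        setLIntegral_div_rpow_le_wnorm f (S.measurableSet_biUnion fun i _ => hI i) hB_pos
          (hμB ▸ ENNReal.ofReal_lt_top)

end WeakNorm

def dyadicIoc (n m : ℕ) : Set ℝ := Ioc ((m : ℝ) / 2 ^ n) (((m : ℝ) + 1) / 2 ^ n)

section Dyadic

variable (n : ℕ)

theorem dyadicIoc_subset_Ici (m : ℕ) : dyadicIoc n m ⊆ Ici 0 :=
  Ioc_subset_Ioi_self.trans (Ioi_subset_Ici (by positivity))

theorem pairwise_disjoint_dyadicIoc : Pairwise (Disjoint on dyadicIoc n) := by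
  refine (pairwise_disjoint_on _).mpr fun a b hab => Ioc_disjoint_Ioc_of_le ?_
  gcongr
  exact_mod_cast hab

theorem volume_restrict_Ici_dyadicIoc (m : ℕ) :
    volume.restrict (Ici 0) (dyadicIoc n m) = ENNReal.ofReal (2 ^ n)⁻¹ := by
  rw [Measure.restrict_eq_self _ (dyadicIoc_subset_Ici n m), dyadicIoc, Real.volume_Ioc]
  congr 1
  ring

theorem ofReal_abs_dyadicInt_le (f : ℝ → ℝ) (m : ℕ) :
    ENNReal.ofReal |dyadicInt f n m| ≤
      ∫⁻ t in dyadicIoc n m, ENNReal.ofReal |f t| ∂volume.restrict (Ici 0) := by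
  have hle : (m : ℝ) / 2 ^ n ≤ ((m : ℝ) + 1) / 2 ^ n := by gcongr; linarith
  rw [Measure.restrict_restrict_of_subset (dyadicIoc_subset_Ici n m), dyadicInt,
    intervalIntegral.integral_of_le hle, dyadicIoc]
  simpa only [Real.enorm_eq_ofReal_abs] using enorm_integral_le_lintegral_enorm f

end Dyadic

/-- The paper's `|||a||| = max_j j^{1/p} a*_j`, with `a*_j = |a_{σ j}|` for a permutation `σ`
sorting the `|a_j|` decreasingly. -/
theorem dyadic_averages_bound_general (p q : ℝ) (hp : 1 < p) (hq : q = p / (p - 1))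
    (k : ℕ) (f : ℝ → ℝ)
    (n : ℕ) (σ : Equiv.Perm (Fin (k * 2 ^ n)))
    (hσ : Antitone fun j : Fin (k * 2 ^ n) => |dyadicInt f n (σ j)|) :
    ENNReal.ofReal ((2:ℝ) ^ ((n : ℝ) / q)) *
      (⨆ j : Fin (k * 2 ^ n),
        ENNReal.ofReal (((j : ℕ) + 1 : ℝ) ^ (1 / p) * |dyadicInt f n (σ j)|)) ≤
    wnorm q (volume.restrict (Ici (0:ℝ))) f := by
  have hpq : p.HolderConjugate q := hq ▸ Real.HolderConjugate.conjExponent hp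
  have hpow : (2 : ℝ) ^ ((n : ℝ) / q) = ((2 ^ n)⁻¹)⁻¹ ^ (1 / q) := by
    rw [inv_inv, ← Real.rpow_natCast, ← Real.rpow_mul zero_le_two, mul_one_div]
  rw [ENNReal.mul_iSup]
  refine iSup_le fun j => ?_
  let S := (Finset.Iic j).map (σ.toEmbedding.trans Fin.valEmbedding)
  have hS : (#S : ℝ) = (j : ℕ) + 1 := by simp [S]
  have hmass : ∀ m ∈ S, ENNReal.ofReal |dyadicInt f n (σ j)| ≤
      ∫⁻ t in dyadicIoc n m, ENNReal.ofReal |f t| ∂volume.restrict (Ici 0) := by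
    simp only [S, mem_map, Finset.mem_Iic]
    rintro _ ⟨i, hij, rfl⟩
    exact (ENNReal.ofReal_le_ofReal (hσ hij)).trans (ofReal_abs_dyadicInt_le n f _)
  have hB := le_wnorm_of_pairwiseDisjoint hpq f (fun _ => measurableSet_Ioc)
    (pairwise_disjoint_dyadicIoc n) (by positivity) (volume_restrict_Ici_dyadicIoc n)
    ⟨σ j, mem_map_of_mem _ (Finset.mem_Iic.mpr le_rfl)⟩ hmass
  rw [← ENNReal.ofReal_mul (by positivity), hpow, ← mul_assoc, ← hS]
  exact hB

/-- Lemma 1 of the paper: for `f ∈ L^{p,∞}[0,∞)` and every `n`,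
`2^{n/q} ||| (∫_{(j-1)/2^n}^{j/2^n} f)_{j=1}^{k·2^n} ||| ≤ ‖f‖`, where
`|||a||| = max_j j^{1/p} a*_j` is expressed through any permutation `σ` arranging the
`|a_j|` in decreasing order. -/
theorem dyadic_averages_bound (p q : ℝ) (hp : 1 < p) (hq : q = p / (p - 1))
    (k : ℕ) (hk : 1 ≤ k) (f : ℝ → ℝ) (hf : MemW q (volume.restrict (Ici (0:ℝ))) f)
    (n : ℕ) (σ : Equiv.Perm (Fin (k * 2 ^ n)))
    (hσ : Antitone fun j : Fin (k * 2 ^ n) => |dyadicInt f n (σ j)|) :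
    ENNReal.ofReal ((2:ℝ) ^ ((n : ℝ) / q)) *
      (⨆ j : Fin (k * 2 ^ n),
        ENNReal.ofReal (((j : ℕ) + 1 : ℝ) ^ (1 / p) * |dyadicInt f n (σ j)|)) ≤
    wnorm q (volume.restrict (Ici (0:ℝ))) f :=
  dyadic_averages_bound_general p q hp hq k f n σ hσ
end

section
/- Let i ≥ 1 be an integer, let b_1, …, b_i be real numbers, and let (c_j)_{j≥1} be a real sequence with ‖c‖ ≤ 1, where ‖c‖ = sup over finite nonempty sets F ⊆ ℕ of (∑_{j∈F}|c_j|)/|F|^{1/q}. Define the sequence d = (d_l)_{l≥0} by d_l = ∑_{j=1}^{i} b_j c_{l·i+j}. Then ‖d‖ ≤ q² ∑_{j=1}^{i} b*_j (j^{1/q} − (j−1)^{1/q}), where (b*_j)_{j=1}^{i} is the decreasing rearrangement of (|b_1|, …, |b_i|). -/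
open MeasureTheory Set ENNReal

open Finset in
/-- Abel-summation comparison: if the partial sums of `T` are dominated by `S` and `a`
is a nonincreasing nonnegative sequence, then `∑ a j * T j ≤ ∑ a j * (S (j+1) - S j)`. -/
private lemma abel_bound (a T S : ℕ → ℝ) (n : ℕ)
    (ha0 : ∀ j, 0 ≤ a j) (haa : ∀ j, a (j + 1) ≤ a j)
    (hS0 : S 0 = 0)
    (hTS : ∀ k, k ≤ n → ∑ j ∈ range k, T j ≤ S k) :
    ∑ j ∈ range n, a j * T j ≤ ∑ j ∈ range n, a j * (S (j + 1) - S j) := by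
  rcases Nat.eq_zero_or_pos n with hn | hn
  · simp [hn]
  have h1 := Finset.sum_range_by_parts a T n
  have h2 := Finset.sum_range_by_parts a (fun j => S (j + 1) - S j) n
  have htel : ∀ m : ℕ, ∑ j ∈ range m, (S (j + 1) - S j) = S m := by
    intro m
    rw [Finset.sum_range_sub S, hS0, sub_zero]
  simp only [smul_eq_mul] at h1 h2
  rw [h1, h2, htel n]
  have hstep : ∀ j ∈ range (n - 1), (a (j + 1) - a j) * S (j + 1) ≤
      (a (j + 1) - a j) * (∑ k ∈ range (j + 1), T k) := by
    intro j hj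
    have hj' : j + 1 ≤ n := by
      have := Finset.mem_range.mp hj
      omega
    exact mul_le_mul_of_nonpos_left (hTS (j + 1) hj') (by linarith [haa j])
  have h3 : ∑ j ∈ range (n - 1), (a (j + 1) - a j) * S (j + 1) ≤
      ∑ j ∈ range (n - 1), (a (j + 1) - a j) * (∑ k ∈ range (j + 1), T k) := by
    exact Finset.sum_le_sum hstep
  have h4 : a (n - 1) * (∑ j ∈ range n, T j) ≤ a (n - 1) * S n :=
    mul_le_mul_of_nonneg_left (hTS n le_rfl) (ha0 _)
  simp only [htel] at h3 ⊢
  linarith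

/-- Extracting the defining property of the weak norm for a finite set. -/
private lemma sum_abs_le_card_rpow {q : ℝ} (hq : 0 < 1 / q) (c : ℕ → ℝ)
    (hc : wnorm q (Measure.count : Measure ℕ) c ≤ 1)
    (G : Finset ℕ) (hG : G.Nonempty) :
    ∑ x ∈ G, |c x| ≤ (G.card : ℝ) ^ (1 / q) := by
  have hcount : (Measure.count : Measure ℕ) (G : Set ℕ) = G.card :=
    Measure.count_apply_finset G
  have hprop : MeasurableSet (G : Set ℕ) ∧ 0 < (Measure.count : Measure ℕ) (G : Set ℕ) ∧
      (Measure.count : Measure ℕ) (G : Set ℕ) < ⊤ := by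
    refine ⟨G.measurableSet, ?_, ?_⟩
    · rw [hcount]
      exact_mod_cast Nat.cast_pos.mpr (Finset.card_pos.mpr hG)
    · rw [hcount]; exact natCast_lt_top _
  have hle : (∫⁻ x in (G : Set ℕ), ENNReal.ofReal |c x| ∂Measure.count) /
      (Measure.count : Measure ℕ) (G : Set ℕ) ^ (1 / q) ≤ 1 := by
    refine le_trans ?_ hc
    exact le_iSup_of_le (G : Set ℕ) (le_iSup_of_le hprop le_rfl)
  have hint : (∫⁻ x in (G : Set ℕ), ENNReal.ofReal |c x| ∂Measure.count) =
      ENNReal.ofReal (∑ x ∈ G, |c x|) := by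
    rw [lintegral_finset]
    simp only [Measure.count_singleton, mul_one]
    rw [ENNReal.ofReal_sum_of_nonneg (fun x _ => abs_nonneg _)]
  have hcard : (0 : ℝ) < (G.card : ℝ) := by
    exact_mod_cast Finset.card_pos.mpr hG
  have hpow : ((G.card : ℝ≥0∞)) ^ (1 / q) = ENNReal.ofReal ((G.card : ℝ) ^ (1 / q)) := by
    rw [← ENNReal.ofReal_rpow_of_nonneg (Nat.cast_nonneg _) hq.le, ENNReal.ofReal_natCast]
  have hpos : ENNReal.ofReal ((G.card : ℝ) ^ (1 / q)) ≠ 0 := by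
    simp only [ne_eq, ENNReal.ofReal_eq_zero, not_le]
    positivity
  rw [hcount, hint, hpow,
    ENNReal.div_le_iff hpos (by simp [ENNReal.ofReal_lt_top.ne]), one_mul] at hle
  exact (ENNReal.ofReal_le_ofReal_iff (by positivity)).mp hle

/-- Lemma 7 of the paper. Given reals `b_1, …, b_i` and a sequence `(c_j)` in the unit ball
of `ℓ^{p,∞}`, the sequence `d_l = ∑_{j=1}^i b_j c_{li+j}` (0-indexed) satisfies
`‖d‖ ≤ q² ∑_j b*_j (j^{1/q} - (j-1)^{1/q})`, where `b*` is the decreasing rearrangement of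
`|b|`, expressed through any permutation `σ` arranging the `|b_j|` in decreasing order. -/
theorem block_coefficient_bound (p q : ℝ) (hp : 1 < p) (hq : q = p / (p - 1))
    (i : ℕ) (hi : 1 ≤ i) (b : Fin i → ℝ) (c : ℕ → ℝ)
    (hc : wnorm q (Measure.count : Measure ℕ) c ≤ 1)
    (σ : Equiv.Perm (Fin i)) (hσ : Antitone fun j : Fin i => |b (σ j)|) :
    wnorm q (Measure.count : Measure ℕ) (fun l : ℕ => ∑ j : Fin i, b j * c (l * i + (j : ℕ))) ≤
    ENNReal.ofReal (q ^ 2 * ∑ j : Fin i,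
      |b (σ j)| * (((j : ℕ) + 1 : ℝ) ^ (1 / q) - ((j : ℕ) : ℝ) ^ (1 / q))) := by
  -- basic facts about q
  have hp1 : 0 < p - 1 := by linarith
  have hq1 : 1 < q := by
    rw [hq, lt_div_iff₀ hp1]
    linarith
  have hq0 : 0 < q := by linarith
  have hiq : 0 < 1 / q := by positivity
  -- the key real-valued constant
  set K : ℝ := ∑ j : Fin i,
      |b (σ j)| * (((j : ℕ) + 1 : ℝ) ^ (1 / q) - ((j : ℕ) : ℝ) ^ (1 / q)) with hK
  have hterm_nonneg : ∀ j : Fin i,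
      0 ≤ |b (σ j)| * (((j : ℕ) + 1 : ℝ) ^ (1 / q) - ((j : ℕ) : ℝ) ^ (1 / q)) := by
    intro j
    apply mul_nonneg (abs_nonneg _)
    have : ((j : ℕ) : ℝ) ^ (1 / q) ≤ (((j : ℕ) : ℝ) + 1) ^ (1 / q) :=
      Real.rpow_le_rpow (Nat.cast_nonneg _) (by linarith) hiq.le
    linarith
  have hK0 : 0 ≤ K := Finset.sum_nonneg fun j _ => hterm_nonneg j
  -- the core real inequality for any nonempty finite set F
  have core : ∀ F : Finset ℕ, F.Nonempty →
      ∑ l ∈ F, |∑ j : Fin i, b j * c (l * i + (j : ℕ))| ≤ (F.card : ℝ) ^ (1 / q) * K := by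
    intro F hF
    set n := F.card with hn
    have hn1 : 1 ≤ n := Finset.card_pos.mpr hF
    -- auxiliary ℕ-indexed data
    set e : ℕ → ℕ := fun j => if h : j < i then ((σ ⟨j, h⟩ : Fin i) : ℕ) else 0 with he
    set a : ℕ → ℝ := fun j => if h : j < i then |b (σ ⟨j, h⟩)| else 0 with ha
    set T : ℕ → ℝ := fun j => ∑ l ∈ F, |c (l * i + e j)| with hT
    set S : ℕ → ℝ := fun k => ((k * n : ℕ) : ℝ) ^ (1 / q) with hS
    have he_lt : ∀ j, j < i → e j < i := by
      intro j hj
      simp only [he, dif_pos hj]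
      exact (σ ⟨j, hj⟩).isLt
    have ha0 : ∀ j, 0 ≤ a j := by
      intro j
      simp only [ha]
      split
      · exact abs_nonneg _
      · exact le_rfl
    have haa : ∀ j, a (j + 1) ≤ a j := by
      intro j
      simp only [ha]
      by_cases h1 : j + 1 < i
      · have h0 : j < i := by omega
        rw [dif_pos h1, dif_pos h0]
        exact hσ (by exact Fin.mk_le_mk.mpr (Nat.le_succ j))
      · rw [dif_neg h1]
        exact ha0 j
    have hS0 : S 0 = 0 := by
      simp only [hS, Nat.zero_mul, Nat.cast_zero]
      exact Real.zero_rpow (ne_of_gt hiq)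
    -- partial-sum bound
    have hTS : ∀ k, k ≤ i → ∑ j ∈ Finset.range k, T j ≤ S k := by
      intro k hk
      rcases Nat.eq_zero_or_pos k with hk0 | hk0
      · simp [hk0, hS0]
      set φ : ℕ × ℕ → ℕ := fun p => p.2 * i + e p.1 with hφ
      have hinj : ∀ x ∈ Finset.range k ×ˢ F, ∀ y ∈ Finset.range k ×ˢ F,
          φ x = φ y → x = y := by
        rintro ⟨j, l⟩ hx ⟨j', l'⟩ hy hxy
        simp only [Finset.mem_product, Finset.mem_range] at hx hy
        have hji : j < i := lt_of_lt_of_le hx.1 hk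
        have hji' : j' < i := lt_of_lt_of_le hy.1 hk
        have hej : e j < i := he_lt j hji
        have hej' : e j' < i := he_lt j' hji'
        simp only [hφ] at hxy
        have hmod : e j = e j' := by
          have h1 : (l * i + e j) % i = e j := by
            rw [mul_comm, Nat.mul_add_mod, Nat.mod_eq_of_lt hej]
          have h2 : (l' * i + e j') % i = e j' := by
            rw [mul_comm, Nat.mul_add_mod, Nat.mod_eq_of_lt hej']
          rw [← h1, ← h2, hxy]
        have hl : l = l' := by
          have h1 : (l * i + e j) / i = l := by
            rw [mul_comm, Nat.mul_add_div (by omega), Nat.div_eq_of_lt hej, add_zero]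
          have h2 : (l' * i + e j') / i = l' := by
            rw [mul_comm, Nat.mul_add_div (by omega), Nat.div_eq_of_lt hej', add_zero]
          rw [← h1, ← h2, hxy]
        have hjj : j = j' := by
          have : σ ⟨j, hji⟩ = σ ⟨j', hji'⟩ := by
            apply Fin.ext
            simpa only [he, dif_pos hji, dif_pos hji'] using hmod
          have := σ.injective this
          exact congrArg Fin.val this
        simp [hjj, hl]
      set G : Finset ℕ := (Finset.range k ×ˢ F).image φ with hG
      have hGne : G.Nonempty := by
        apply Finset.Nonempty.image
        exact Finset.Nonempty.product ⟨0, Finset.mem_range.mpr hk0⟩ hF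
      have hGcard : G.card = k * n := by
        rw [hG, Finset.card_image_of_injOn hinj, Finset.card_product, Finset.card_range, hn]
      have hsum : ∑ x ∈ G, |c x| = ∑ j ∈ Finset.range k, T j := by
        rw [hG, Finset.sum_image hinj, Finset.sum_product]
      calc ∑ j ∈ Finset.range k, T j = ∑ x ∈ G, |c x| := hsum.symm
        _ ≤ (G.card : ℝ) ^ (1 / q) := sum_abs_le_card_rpow hiq c hc G hGne
        _ = S k := by rw [hGcard]
    -- Abel summation
    have habel := abel_bound a T S i ha0 haa hS0 hTS
    -- LHS chain
    have hLHS : ∑ l ∈ F, |∑ j : Fin i, b j * c (l * i + (j : ℕ))| ≤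
        ∑ j ∈ Finset.range i, a j * T j := by
      have step1 : ∑ l ∈ F, |∑ j : Fin i, b j * c (l * i + (j : ℕ))| ≤
          ∑ l ∈ F, ∑ j : Fin i, |b j| * |c (l * i + (j : ℕ))| := by
        apply Finset.sum_le_sum
        intro l _
        refine le_trans (Finset.abs_sum_le_sum_abs _ _) ?_
        apply Finset.sum_le_sum
        intro j _
        rw [abs_mul]
      have step2 : ∑ l ∈ F, ∑ j : Fin i, |b j| * |c (l * i + (j : ℕ))| =
          ∑ j : Fin i, |b j| * (∑ l ∈ F, |c (l * i + (j : ℕ))|) := by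
        rw [Finset.sum_comm]
        simp [Finset.mul_sum]
      have step3 : ∑ j : Fin i, |b j| * (∑ l ∈ F, |c (l * i + (j : ℕ))|) =
          ∑ j : Fin i, |b (σ j)| * (∑ l ∈ F, |c (l * i + ((σ j : Fin i) : ℕ))|) :=
        (Equiv.sum_comp σ (fun j => |b j| * (∑ l ∈ F, |c (l * i + (j : ℕ))|))).symm
      have step4 : ∑ j : Fin i, |b (σ j)| * (∑ l ∈ F, |c (l * i + ((σ j : Fin i) : ℕ))|) =
          ∑ j ∈ Finset.range i, a j * T j := by
        rw [← Fin.sum_univ_eq_sum_range (fun j => a j * T j) i]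
        apply Finset.sum_congr rfl
        intro j _
        simp only [ha, hT, he, dif_pos j.isLt, Fin.eta]
      rw [step2, step3, step4] at step1
      exact step1
    -- RHS chain
    have hSdiff : ∀ j : ℕ, S (j + 1) - S j =
        (n : ℝ) ^ (1 / q) * (((j : ℝ) + 1) ^ (1 / q) - (j : ℝ) ^ (1 / q)) := by
      intro j
      have h1 : ∀ k : ℕ, S k = (k : ℝ) ^ (1 / q) * (n : ℝ) ^ (1 / q) := by
        intro k
        simp only [hS]
        push_cast
        rw [Real.mul_rpow (Nat.cast_nonneg _) (Nat.cast_nonneg _)]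
      rw [h1, h1]
      push_cast
      ring
    have hRHS : ∑ j ∈ Finset.range i, a j * (S (j + 1) - S j) = (n : ℝ) ^ (1 / q) * K := by
      rw [hK, ← Fin.sum_univ_eq_sum_range
        (fun j => a j * (S (j + 1) - S j)) i, Finset.mul_sum]
      apply Finset.sum_congr rfl
      intro j _
      rw [hSdiff]
      simp only [ha, dif_pos j.isLt, Fin.eta]
      push_cast
      ring
    calc ∑ l ∈ F, |∑ j : Fin i, b j * c (l * i + (j : ℕ))|
        ≤ ∑ j ∈ Finset.range i, a j * T j := hLHS
      _ ≤ ∑ j ∈ Finset.range i, a j * (S (j + 1) - S j) := habel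
      _ = (n : ℝ) ^ (1 / q) * K := hRHS
  -- now bound the weak norm
  simp only [wnorm]
  refine iSup_le fun B => iSup_le fun hB => ?_
  obtain ⟨hBm, hB0, hBt⟩ := hB
  have hBfin : B.Finite := (Measure.count_apply_lt_top).mp hBt
  set F : Finset ℕ := hBfin.toFinset with hF
  have hFB : (F : Set ℕ) = B := hBfin.coe_toFinset
  have hFne : F.Nonempty := by
    rw [← Finset.coe_nonempty, hFB]
    by_contra h
    rw [not_nonempty_iff_eq_empty] at h
    simp [h] at hB0
  have hcount : (Measure.count : Measure ℕ) B = F.card := by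
    rw [← hFB]
    exact Measure.count_apply_finset F
  set d : ℕ → ℝ := fun l => ∑ j : Fin i, b j * c (l * i + (j : ℕ)) with hd
  have hint : (∫⁻ x in B, ENNReal.ofReal |d x| ∂Measure.count) =
      ENNReal.ofReal (∑ l ∈ F, |d l|) := by
    rw [← hFB, lintegral_finset]
    simp only [Measure.count_singleton, mul_one]
    rw [ENNReal.ofReal_sum_of_nonneg (fun x _ => abs_nonneg _)]
  have hn1 : (0 : ℝ) < (F.card : ℝ) := by exact_mod_cast Finset.card_pos.mpr hFne
  have hpow : ((F.card : ℝ≥0∞)) ^ (1 / q) = ENNReal.ofReal ((F.card : ℝ) ^ (1 / q)) := by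
    rw [← ENNReal.ofReal_rpow_of_nonneg (Nat.cast_nonneg _) hiq.le, ENNReal.ofReal_natCast]
  have hpowpos : (0 : ℝ) < (F.card : ℝ) ^ (1 / q) := Real.rpow_pos_of_pos hn1 _
  rw [hint, hcount, hpow]
  rw [ENNReal.div_le_iff (by simp only [ne_eq, ENNReal.ofReal_eq_zero, not_le]; exact hpowpos)
    (by simp [ENNReal.ofReal_lt_top.ne])]
  rw [← ENNReal.ofReal_mul (by positivity)]
  apply ENNReal.ofReal_le_ofReal
  have hcore := core F hFne
  have hq2 : 1 ≤ q ^ 2 := by nlinarith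
  calc ∑ l ∈ F, |d l| ≤ (F.card : ℝ) ^ (1 / q) * K := hcore
    _ ≤ (q ^ 2 * K) * (F.card : ℝ) ^ (1 / q) := by
        rw [mul_comm]
        apply mul_le_mul_of_nonneg_right _ hpowpos.le
        nlinarith
end

section
/- The weak L^p norm satisfies an upper p-estimate with constant 1: if f_1, …, f_N ∈ L^{p,∞}(Ω,Σ,μ) have pairwise disjoint supports (i.e., for i ≠ j, f_i·f_j = 0 almost everywhere), then ‖f_1 + ⋯ + f_N‖ ≤ (‖f_1‖^p + ⋯ + ‖f_N‖^p)^{1/p}. -/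
open MeasureTheory Set ENNReal

/-!
Split a test set `B` into the pieces `Bᵢ = {fᵢ ≠ 0} ∩ B`. The integral of `|fᵢ|` over `Bᵢ`
is at most `‖fᵢ‖ μ(Bᵢ)^{1/q}`, and Hölder's inequality for finite sums bounds
`∑ ‖fᵢ‖ μ(Bᵢ)^{1/q}` by `(∑ ‖fᵢ‖^p)^{1/p} (∑ μ(Bᵢ))^{1/q}`. Disjointness of the supports
gives `∑ μ(Bᵢ) ≤ μ(B)`.
-/

open Function

namespace ENNReal

lemma sum_mul_rpow_one_div_le {ι : Type*} (s : Finset ι) (a b : ι → ℝ≥0∞) {p q : ℝ}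
    (hpq : p.HolderConjugate q) :
    ∑ i ∈ s, a i * b i ^ (1 / q)
      ≤ (∑ i ∈ s, a i ^ p) ^ (1 / p) * (∑ i ∈ s, b i) ^ (1 / q) := by
  have hb : ∀ i, (b i ^ (1 / q)) ^ q = b i := fun i => by
    rw [← ENNReal.rpow_mul, one_div_mul_cancel hpq.symm.ne_zero, ENNReal.rpow_one]
  simpa only [hb] using ENNReal.inner_le_Lp_mul_Lq s a (fun i => b i ^ (1 / q)) hpq

end ENNReal

section WeakLp

variable {α : Type*} [MeasurableSpace α] {μ : Measure α} {q : ℝ}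

lemma wnorm_le_of_forall_setLIntegral_le {f : α → ℝ} {C : ℝ≥0∞}
    (h : ∀ B, MeasurableSet B → 0 < μ B → μ B < ⊤ →
      ∫⁻ x in B, ENNReal.ofReal |f x| ∂μ ≤ C * μ B ^ (1 / q)) :
    wnorm q μ f ≤ C :=
  iSup₂_le fun B ⟨hBm, hB0, hBt⟩ =>
    (ENNReal.div_le_iff (ENNReal.rpow_pos hB0 hBt.ne).ne'
      (rpow_ne_top_of_ne_zero hB0.ne' hBt.ne)).2 (h B hBm hB0 hBt)

lemma setLIntegral_le_wnorm_mul_rpow {f : α → ℝ} {s : Set α} (hs : MeasurableSet s)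
    (hμs : μ s < ⊤) :
    ∫⁻ x in s, ENNReal.ofReal |f x| ∂μ ≤ wnorm q μ f * μ s ^ (1 / q) := by
  rcases eq_zero_or_pos (μ s) with h0 | h0
  · simp [Measure.restrict_eq_zero.2 h0]
  · rw [← ENNReal.div_le_iff (ENNReal.rpow_pos h0 hμs.ne).ne'
      (rpow_ne_top_of_ne_zero h0.ne' hμs.ne)]
    exact le_iSup₂_of_le s ⟨hs, h0, hμs⟩ le_rfl

variable {ι : Type*} [Fintype ι] {f : ι → α → ℝ}

lemma setLIntegral_abs_sum_le (hf : ∀ i, Measurable (f i)) (B : Set α) :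
    ∫⁻ x in B, ENNReal.ofReal |(∑ i, f i) x| ∂μ
      ≤ ∑ i, ∫⁻ x in support (f i) ∩ B, ENNReal.ofReal |f i x| ∂μ :=
  calc ∫⁻ x in B, ENNReal.ofReal |(∑ i, f i) x| ∂μ
      ≤ ∫⁻ x in B, ∑ i, ENNReal.ofReal |f i x| ∂μ := lintegral_mono fun x => by
        rw [Finset.sum_apply, ← ofReal_sum_of_nonneg fun i _ => abs_nonneg _]
        exact ENNReal.ofReal_le_ofReal (Finset.abs_sum_le_sum_abs _ _)
    _ = ∑ i, ∫⁻ x in B, ENNReal.ofReal |f i x| ∂μ :=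
        lintegral_finsetSum _ fun i _ => (hf i).abs.ennreal_ofReal
    _ = ∑ i, ∫⁻ x in support (f i) ∩ B, ENNReal.ofReal |f i x| ∂μ :=
        Finset.sum_congr rfl fun i _ => by
          rw [← Measure.restrict_restrict (measurableSet_support (hf i))]
          exact (setLIntegral_eq_of_support_subset fun x hx => by simpa using hx).symm

lemma sum_measure_support_inter_le (hf : ∀ i, Measurable (f i))
    (hdisj : ∀ i j, i ≠ j → ∀ᵐ x ∂μ, f i x * f j x = 0) (B : Set α) :
    ∑ i, μ (support (f i) ∩ B) ≤ μ B := by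
  have hdisjB : Set.Pairwise (Finset.univ : Finset ι)
      (AEDisjoint (μ.restrict B) on fun i => support (f i)) := fun i _ j _ hij =>
    measure_mono_null (fun x hx => mul_ne_zero hx.1 hx.2)
      (ae_iff.1 (ae_restrict_of_ae (hdisj i j hij)))
  simpa [Measure.restrict_apply (measurableSet_support (hf _))] using
    sum_measure_le_measure_univ
      (fun i _ => (measurableSet_support (hf i)).nullMeasurableSet) hdisjB

theorem wnorm_sum_le_of_aedisjoint {p : ℝ} (hpq : p.HolderConjugate q)
    (hf : ∀ i, Measurable (f i))
    (hdisj : ∀ i j, i ≠ j → ∀ᵐ x ∂μ, f i x * f j x = 0) :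
    wnorm q μ (∑ i, f i) ≤ (∑ i, wnorm q μ (f i) ^ p) ^ (1 / p) := by
  refine wnorm_le_of_forall_setLIntegral_le fun B hB _ hBt => ?_
  have hq : 0 ≤ 1 / q := one_div_nonneg.2 hpq.symm.nonneg
  calc ∫⁻ x in B, ENNReal.ofReal |(∑ i, f i) x| ∂μ
      ≤ ∑ i, ∫⁻ x in support (f i) ∩ B, ENNReal.ofReal |f i x| ∂μ :=
        setLIntegral_abs_sum_le hf B
    _ ≤ ∑ i, wnorm q μ (f i) * μ (support (f i) ∩ B) ^ (1 / q) :=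
        Finset.sum_le_sum fun i _ => setLIntegral_le_wnorm_mul_rpow
          ((measurableSet_support (hf i)).inter hB)
          ((measure_mono inter_subset_right).trans_lt hBt)
    _ ≤ (∑ i, wnorm q μ (f i) ^ p) ^ (1 / p) * (∑ i, μ (support (f i) ∩ B)) ^ (1 / q) :=
        ENNReal.sum_mul_rpow_one_div_le _ _ _ hpq
    _ ≤ (∑ i, wnorm q μ (f i) ^ p) ^ (1 / p) * μ B ^ (1 / q) :=
        mul_le_mul_right (ENNReal.rpow_le_rpow (sum_measure_support_inter_le hf hdisj B) hq) _

end WeakLp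

/-- The weak `L^p` norm satisfies an upper `p`-estimate with constant `1`: for
`f_1, …, f_N` in the weak `L^p` space with pairwise disjoint supports,
`‖f_1 + ⋯ + f_N‖ ≤ (‖f_1‖^p + ⋯ + ‖f_N‖^p)^{1/p}`. -/
theorem wnorm_upper_p_estimate (p q : ℝ) (hp : 1 < p) (hq : q = p / (p - 1))
    {α : Type*} [MeasurableSpace α] (μ : Measure α) (N : ℕ) (f : Fin N → (α → ℝ))
    (hf : ∀ i, MemW q μ (f i))
    (hdisj : ∀ i j, i ≠ j → ∀ᵐ x ∂μ, f i x * f j x = 0) :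
    wnorm q μ (∑ i, f i) ≤ (∑ i, wnorm q μ (f i) ^ p) ^ (1 / p) :=
  wnorm_sum_le_of_aedisjoint (hq ▸ Real.HolderConjugate.conjExponent hp) (fun i => (hf i).1) hdisj
end

section
/- For all integers j ≥ 1 and r ≥ 0, ∑_{l=0}^{r} ((j-1)(r+1) + l + 1)^{-1/p} ≤ q (r+1)^{1/q} (j^{1/q} − (j−1)^{1/q}). -/
/-!
With `α = 1/q = 1 - 1/p ∈ (0, 1)`, concavity of `t ↦ t ^ α` bounds each summand
`(c + l + 1) ^ (α - 1)` by `q ((c + l + 1) ^ α - (c + l) ^ α)`, where `c = (j - 1)(r + 1)`.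
The bounds telescope to `q ((j (r + 1)) ^ α - ((j - 1)(r + 1)) ^ α)`.
-/

open Finset

namespace Real

lemma rpow_le_rpow_add_mul_sub {x y α : ℝ} (hx : 0 ≤ x) (hy : 0 < y) (hα0 : 0 ≤ α)
    (hα1 : α ≤ 1) : x ^ α ≤ y ^ α + α * y ^ (α - 1) * (x - y) := by
  have hbern : (1 + (x / y - 1)) ^ α ≤ 1 + α * (x / y - 1) :=
    rpow_one_add_le_one_add_mul_self (by linarith [div_nonneg hx hy.le]) hα0 hα1
  rw [add_sub_cancel, div_rpow hx hy.le, div_le_iff₀ (rpow_pos_of_pos hy α)] at hbern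
  calc x ^ α ≤ (1 + α * (x / y - 1)) * y ^ α := hbern
    _ = y ^ α + α * (y ^ α * y⁻¹) * (x - y) := by field_simp
    _ = y ^ α + α * y ^ (α - 1) * (x - y) := by rw [rpow_sub_one hy.ne']; ring

lemma mul_sum_range_rpow_sub_one_le {c α : ℝ} (hc : 0 ≤ c) (hα0 : 0 ≤ α) (hα1 : α ≤ 1)
    (n : ℕ) :
    α * ∑ l ∈ range n, (c + l + 1) ^ (α - 1) ≤ (c + n) ^ α - c ^ α := by
  have hstep (l : ℕ) : α * (c + l + 1) ^ (α - 1) ≤ (c + (l + 1 : ℕ)) ^ α - (c + l) ^ α := by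
    have := rpow_le_rpow_add_mul_sub (x := c + l) (y := c + l + 1) (by positivity)
      (by positivity) hα0 hα1
    rw [Nat.cast_succ, ← add_assoc]
    linarith
  calc α * ∑ l ∈ range n, (c + l + 1) ^ (α - 1)
      ≤ ∑ l ∈ range n, ((c + (l + 1 : ℕ)) ^ α - (c + l) ^ α) := by
        rw [mul_sum]; exact sum_le_sum fun l _ ↦ hstep l
    _ = (c + n) ^ α - c ^ α := by
        rw [sum_range_sub (fun l : ℕ ↦ (c + l) ^ α)]; simp

end Real

/-- The elementary estimate used in Lemma 7 of the paper: for integers `j ≥ 1` and `r ≥ 0`,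
`∑_{l=0}^{r} ((j-1)(r+1) + l + 1)^{-1/p} ≤ q (r+1)^{1/q} (j^{1/q} - (j-1)^{1/q})`,
where `1 < p < ∞` and `q = p/(p-1)`. -/
theorem sum_rpow_neg_inv_le (p q : ℝ) (hp : 1 < p) (hq : q = p / (p - 1))
    (j : ℕ) (hj : 1 ≤ j) (r : ℕ) :
    ∑ l ∈ Finset.range (r + 1),
        (((j : ℝ) - 1) * ((r : ℝ) + 1) + (l : ℝ) + 1) ^ (-(1 / p)) ≤
      q * ((r : ℝ) + 1) ^ (1 / q) * ((j : ℝ) ^ (1 / q) - ((j : ℝ) - 1) ^ (1 / q)) := by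
  have hp0 : 0 < p := by linarith
  have hq0 : 0 < q := by rw [hq]; exact div_pos hp0 (by linarith)
  have hq_inv_sub_one : 1 / q - 1 = -(1 / p) := by rw [hq]; field_simp; ring
  have hq_inv_le_one : 1 / q ≤ 1 := by linarith [one_div_pos.mpr hp0]
  have hj1 : (0 : ℝ) ≤ j - 1 := by rw [sub_nonneg]; exact_mod_cast hj
  have hsum := Real.mul_sum_range_rpow_sub_one_le
    (mul_nonneg hj1 (by positivity : (0 : ℝ) ≤ r + 1))
    (one_div_pos.mpr hq0).le hq_inv_le_one (r + 1)
  rw [hq_inv_sub_one] at hsum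
  have hend : ((j : ℝ) - 1) * (r + 1) + ((r + 1 : ℕ) : ℝ) = j * (r + 1) := by push_cast; ring
  rw [hend, Real.mul_rpow (by positivity) (by positivity),
    Real.mul_rpow hj1 (by positivity)] at hsum
  calc ∑ l ∈ range (r + 1), (((j : ℝ) - 1) * (r + 1) + l + 1) ^ (-(1 / p))
      = q * (1 / q * ∑ l ∈ range (r + 1), (((j : ℝ) - 1) * (r + 1) + l + 1) ^ (-(1 / p))) := by
        field_simp
    _ ≤ q * ((j : ℝ) ^ (1 / q) * (r + 1) ^ (1 / q) - (j - 1) ^ (1 / q) * (r + 1) ^ (1 / q)) := by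
        gcongr
    _ = q * ((r : ℝ) + 1) ^ (1 / q) * ((j : ℝ) ^ (1 / q) - ((j : ℝ) - 1) ^ (1 / q)) := by ring
end
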